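/- Subcritical stabilization on ℤ^d. Let d ≥ 1 and let (s(x))_{x ∈ ℤ^d} be i.i.d. real random variables with E[|s(0)|] < ∞ and E[s(0)] < 1. Then almost surely s stabilizes under parallel toppling, i.e. almost surely u_∞(x) < ∞ for every x ∈ ℤ^d. -/

import Mathlib

open MeasureTheory ProbabilityTheory ENNReal

/-- The graph Laplacian on `ℤ^d`: `Δf(x) = (1/(2d)) Σ_{y ∼ x} (f(y) - f(x))`. -/
noncomputable def latLap (d : ℕ) (f : (Fin d → ℤ) → ℝ) (x : Fin d → ℤ) : ℝ :=
  (2 * (d : ℝ))⁻¹ * ∑ i : Fin d,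
    ((f (Function.update x i (x i + 1)) - f x) + (f (Function.update x i (x i - 1)) - f x))

/-- Parallel toppling on `ℤ^d`: `s_0 = s`, `s_{t+1} = s_t + Δ e_t`, `e_t(x) = max(s_t(x)-1, 0)`. -/
noncomputable def latConf (d : ℕ) (s : (Fin d → ℤ) → ℝ) : ℕ → (Fin d → ℤ) → ℝ
  | 0 => s
  | t + 1 => fun x =>
      latConf d s t x + latLap d (fun y => max (latConf d s t y - 1) 0) x

/-- The odometer at time `t`: `u_t = Σ_{i<t} e_i`. -/
noncomputable def latOdo (d : ℕ) (s : (Fin d → ℤ) → ℝ) (t : ℕ) (x : Fin d → ℤ) : ℝ :=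
  ∑ i ∈ Finset.range t, max (latConf d s i x - 1) 0

/-- `u_∞(x) = lim_{t→∞} u_t(x) ∈ [0,∞]` (the limit of the nondecreasing odometers). -/
noncomputable def latOdoInf (d : ℕ) (s : (Fin d → ℤ) → ℝ) (x : Fin d → ℤ) : ℝ≥0∞ :=
  ⨆ t : ℕ, ENNReal.ofReal (latOdo d s t x)

/-!
Let `ν` be the law of `s`, an i.i.d. product measure on `ℝ^(ℤ^d)`, and `N` the event that some
odometer diverges. A site whose odometer diverges sends unbounded mass to each neighbour, whose
odometer then diverges too; so on `N` every odometer diverges, and every site eventually holds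
mass `≥ 1` forever. Both `ν` and `N` are shift invariant, and toppling only moves mass between
neighbours, so `∫_N s_t(0) dν = ∫_N s(0) dν` for all `t`. Averaging `∫_N s(x) dν` over many sites
and applying the L¹ strong law gives `∫_N s(0) dν = E[s(0)] ν(N)`, while letting `t → ∞`
(dominated convergence) gives `ν(N) ≤ ∫_N s(0) dν`. Hence `ν(N) ≤ E[s(0)] ν(N)`, so `ν(N) = 0`.
-/

open Filter Topology

variable {d : ℕ}

section Single

variable {ι G : Type*} [DecidableEq ι]

lemma update_add_eq_add_single [AddZeroClass G] (x : ι → G) (i : ι) (c : G) :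
    Function.update x i (x i + c) = x + Pi.single i c := by
  ext j
  rcases eq_or_ne j i with rfl | hj <;> simp [Function.update_of_ne, *]

lemma update_sub_eq_sub_single [AddGroup G] (x : ι → G) (i : ι) (c : G) :
    Function.update x i (x i - c) = x - Pi.single i c := by
  rw [sub_eq_add_neg, update_add_eq_add_single, Pi.single_neg, ← sub_eq_add_neg]

lemma eq_univ_of_forall_add_single_mem [Fintype ι] {S : Set (ι → ℤ)}
    (hS : ∀ x ∈ S, ∀ i, x + Pi.single i 1 ∈ S ∧ x - Pi.single i 1 ∈ S) (hne : S.Nonempty) :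
    S = Set.univ := by
  let H : AddSubgroup (ι → ℤ) :=
    { carrier := {z | ∀ x, x ∈ S ↔ x + z ∈ S}
      add_mem' := fun {a b} ha hb x => (ha x).trans (by rw [← add_assoc]; exact hb (x + a))
      zero_mem' := fun x => by rw [add_zero]
      neg_mem' := fun {a} ha x => by simpa [← sub_eq_add_neg] using (ha (x - a)).symm }
  have hsingle (i : ι) : Pi.single i 1 ∈ H := fun x =>
    ⟨fun hx => (hS x hx i).1, fun hx => by simpa using (hS _ hx i).2⟩
  have hH (z : ι → ℤ) : z ∈ H := by
    rw [← Finset.univ_sum_single z]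
    refine sum_mem fun i _ => ?_
    simpa [← Pi.single_smul'] using zsmul_mem (hsingle i) (z i)
  obtain ⟨x₀, hx₀⟩ := hne
  exact Set.eq_univ_of_forall fun y => by simpa using (hH (y - x₀) x₀).mp hx₀

end Single

lemma measureReal_univ_le_of_eventually_one_le {α : Type*} [MeasurableSpace α] {ν : Measure α}
    [IsFiniteMeasure ν] {f : ℕ → α → ℝ} {g : α → ℝ} {c : ℝ} (hg : Integrable g ν)
    (hf : ∀ t, Integrable (f t) ν) (hgf : ∀ t a, g a ≤ f t a)
    (hone : ∀ᵐ a ∂ν, ∀ᶠ t in atTop, 1 ≤ f t a) (hc : ∀ t, ∫ a, f t a ∂ν ≤ c) :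
    ν.real Set.univ ≤ c := by
  have hmin (t : ℕ) : Integrable (fun a => min (f t a) 1) ν := (hf t).inf (integrable_const 1)
  have hlim : Tendsto (fun t => ∫ a, min (f t a) 1 ∂ν) atTop (𝓝 (∫ _, (1 : ℝ) ∂ν)) := by
    refine tendsto_integral_of_dominated_convergence (fun a => |g a| + 1)
      (fun t => (hmin t).aestronglyMeasurable) (hg.abs.add (integrable_const 1))
      (fun t => ae_of_all _ fun a => ?_) ?_
    · have hlow : -|g a| ≤ min (f t a) 1 :=
        le_min ((neg_abs_le _).trans (hgf t a)) (by linarith [abs_nonneg (g a)])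
      rw [Real.norm_eq_abs, abs_le]
      constructor <;> linarith [min_le_right (f t a) 1, abs_nonneg (g a)]
    · filter_upwards [hone] with a ha
      exact tendsto_const_nhds.congr' (ha.mono fun t ht => (min_eq_right ht).symm)
  rw [integral_const, smul_eq_mul, mul_one] at hlim
  exact le_of_tendsto' hlim fun t =>
    (integral_mono (hmin t) (hf t) fun a => min_le_left _ _).trans (hc t)

theorem eq_measureReal_mul_integral_of_setIntegral_eq {Ω : Type*} [MeasurableSpace Ω]
    {μ : Measure Ω} {X : ℕ → Ω → ℝ} (hint : Integrable (X 0) μ)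
    (hindep : Pairwise fun i j => X i ⟂ᵢ[μ] X j) (hident : ∀ i, IdentDistrib (X i) (X 0) μ μ)
    (A : Set Ω) {κ : ℝ} (hA : ∀ i, ∫ ω in A, X i ω ∂μ = κ) :
    κ = μ.real A * ∫ ω, X 0 ω ∂μ := by
  have hX (i : ℕ) : Integrable (X i) μ := (hident i).integrable_iff.mpr hint
  have hlim := tendsto_setIntegral_of_L1' (fun _ => ∫ ω, X 0 ω ∂μ) aestronglyMeasurable_const
    (F := fun (n : ℕ) ω => (n : ℝ)⁻¹ • ∑ i ∈ Finset.range n, X i ω)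
    (Eventually.of_forall fun n => (integrable_finsetSum _ fun i _ => hX i).const_mul _)
    (strong_law_Lp le_rfl ENNReal.one_ne_top X (memLp_one_iff_integrable.mpr hint) hindep hident) A
  rw [setIntegral_const, smul_eq_mul] at hlim
  refine tendsto_nhds_unique (tendsto_const_nhds.congr' ?_) hlim
  filter_upwards [eventually_ne_atTop 0] with n hn
  rw [integral_smul, integral_finsetSum _ fun i _ => (hX i).integrableOn,
    Finset.sum_congr rfl fun i _ => hA i, Finset.sum_const, Finset.card_range, nsmul_eq_mul,
    smul_eq_mul, inv_mul_cancel_left₀ (Nat.cast_ne_zero.mpr hn)]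

noncomputable def latAvg (d : ℕ) (f : (Fin d → ℤ) → ℝ) (x : Fin d → ℤ) : ℝ :=
  (2 * (d : ℝ))⁻¹ * ∑ i : Fin d, (f (x + Pi.single i 1) + f (x - Pi.single i 1))

lemma latLap_eq_latAvg_sub (hd : d ≠ 0) (f : (Fin d → ℤ) → ℝ) (x : Fin d → ℤ) :
    latLap d f x = latAvg d f x - f x := by
  have : (2 * (d : ℝ)) ≠ 0 := by positivity
  simp only [latLap, latAvg, update_add_eq_add_single, update_sub_eq_sub_single,
    Finset.sum_add_distrib, Finset.sum_sub_distrib, Finset.sum_const, Finset.card_univ,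
    Fintype.card_fin, nsmul_eq_mul]
  field_simp
  ring

lemma latAvg_nonneg {f : (Fin d → ℤ) → ℝ} (hf : ∀ y, 0 ≤ f y) (x : Fin d → ℤ) : 0 ≤ latAvg d f x :=
  mul_nonneg (by positivity) (Finset.sum_nonneg fun _ _ => add_nonneg (hf _) (hf _))

lemma inv_mul_le_latAvg {f : (Fin d → ℤ) → ℝ} (hf : ∀ y, 0 ≤ f y) {x y : Fin d → ℤ} {i : Fin d}
    (hxy : x = y + Pi.single i 1 ∨ x = y - Pi.single i 1) :
    (2 * (d : ℝ))⁻¹ * f x ≤ latAvg d f y := by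
  have hx : f x ≤ f (y + Pi.single i 1) + f (y - Pi.single i 1) := by
    rcases hxy with rfl | rfl
    · exact le_add_of_nonneg_right (hf _)
    · exact le_add_of_nonneg_left (hf _)
  unfold latAvg
  gcongr
  exact hx.trans (Finset.single_le_sum (f := fun j => f (y + Pi.single j 1) + f (y - Pi.single j 1))
    (fun j _ => add_nonneg (hf _) (hf _)) (Finset.mem_univ i))

noncomputable def latExcess (d : ℕ) (σ : (Fin d → ℤ) → ℝ) (t : ℕ) (x : Fin d → ℤ) : ℝ :=
  max (latConf d σ t x - 1) 0

lemma latExcess_nonneg (σ : (Fin d → ℤ) → ℝ) (t : ℕ) (x : Fin d → ℤ) : 0 ≤ latExcess d σ t x :=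
  le_max_right _ _

lemma latConf_succ (σ : (Fin d → ℤ) → ℝ) (t : ℕ) (x : Fin d → ℤ) :
    latConf d σ (t + 1) x = latConf d σ t x + latLap d (latExcess d σ t) x :=
  rfl

lemma latOdo_succ (σ : (Fin d → ℤ) → ℝ) (t : ℕ) (x : Fin d → ℤ) :
    latOdo d σ (t + 1) x = latOdo d σ t x + latExcess d σ t x :=
  Finset.sum_range_succ _ _

lemma latConf_succ_eq_min_add (hd : d ≠ 0) (σ : (Fin d → ℤ) → ℝ) (t : ℕ) (x : Fin d → ℤ) :
    latConf d σ (t + 1) x = min (latConf d σ t x) 1 + latAvg d (latExcess d σ t) x := by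
  have hmin : ∀ a : ℝ, min a 1 = a - max (a - 1) 0 := by
    intro a; rcases le_total a 1 with h | h <;> simp [h]
  rw [latConf_succ, latLap_eq_latAvg_sub hd, hmin, latExcess]
  ring

noncomputable def latInflow (d : ℕ) (σ : (Fin d → ℤ) → ℝ) (T : ℕ) (x : Fin d → ℤ) : ℝ :=
  ∑ t ∈ Finset.range T, latAvg d (latExcess d σ t) x

lemma latInflow_succ (σ : (Fin d → ℤ) → ℝ) (t : ℕ) (x : Fin d → ℤ) :
    latInflow d σ (t + 1) x = latInflow d σ t x + latAvg d (latExcess d σ t) x :=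
  Finset.sum_range_succ _ _

/-- The odometer identity `s_T = s + Δ u_T`, with the Laplacian split into inflow and outflow. -/
lemma latConf_add_latOdo (hd : d ≠ 0) (σ : (Fin d → ℤ) → ℝ) (T : ℕ) (x : Fin d → ℤ) :
    latConf d σ T x + latOdo d σ T x = σ x + latInflow d σ T x := by
  induction T with
  | zero => simp [latConf, latOdo, latInflow]
  | succ T ih =>
    rw [latConf_succ, latOdo_succ, latLap_eq_latAvg_sub hd, latInflow_succ]
    linarith

lemma min_le_latConf (hd : d ≠ 0) (σ : (Fin d → ℤ) → ℝ) (t : ℕ) (x : Fin d → ℤ) :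
    min (σ x) 1 ≤ latConf d σ t x := by
  induction t with
  | zero => exact min_le_left _ _
  | succ t ih =>
    rw [latConf_succ_eq_min_add hd]
    linarith [latAvg_nonneg (latExcess_nonneg σ t) x, le_min ih (min_le_right (σ x) 1)]

lemma one_le_latConf_of_le (hd : d ≠ 0) {σ : (Fin d → ℤ) → ℝ} {x : Fin d → ℤ} {T : ℕ}
    (hT : 1 ≤ latConf d σ T x) {t : ℕ} (ht : T ≤ t) : 1 ≤ latConf d σ t x := by
  induction t, ht using Nat.le_induction with
  | base => exact hT
  | succ t _ ih =>
    rw [latConf_succ_eq_min_add hd, min_eq_right ih]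
    linarith [latAvg_nonneg (latExcess_nonneg σ t) x]

lemma monotone_latOdo (σ : (Fin d → ℤ) → ℝ) (x : Fin d → ℤ) :
    Monotone fun T => latOdo d σ T x :=
  monotone_nat_of_le_succ fun t => by
    rw [latOdo_succ]; linarith [latExcess_nonneg σ t x]

lemma latOdoInf_eq_top_iff (σ : (Fin d → ℤ) → ℝ) (x : Fin d → ℤ) :
    latOdoInf d σ x = ⊤ ↔ Tendsto (fun T => latOdo d σ T x) atTop atTop := by
  rw [(monotone_latOdo σ x).tendsto_atTop_atTop_iff, latOdoInf, iSup_eq_top]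
  constructor
  · intro h M
    obtain ⟨T, hT⟩ := h (ENNReal.ofReal M) ENNReal.ofReal_lt_top
    exact ⟨T, (ENNReal.ofReal_lt_ofReal_iff'.mp hT).1.le⟩
  · intro h b hb
    obtain ⟨T, hT⟩ := h (b.toReal + 1)
    exact ⟨T, (ENNReal.lt_ofReal_iff_toReal_lt hb.ne).mpr (by linarith)⟩

lemma tendsto_latOdo_iff_tendsto_latInflow (hd : d ≠ 0) (σ : (Fin d → ℤ) → ℝ)
    (x : Fin d → ℤ) :
    Tendsto (fun T => latOdo d σ T x) atTop atTop
      ↔ Tendsto (fun T => latInflow d σ T x) atTop atTop := by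
  have hid (T : ℕ) := latConf_add_latOdo hd σ T x
  constructor
  · intro h
    refine tendsto_atTop_mono (fun T => ?_) (tendsto_atTop_add_const_right _ (min (σ x) 1 - σ x) h)
    linarith [hid T, min_le_latConf hd σ T x]
  · intro h
    rw [← tendsto_add_atTop_iff_nat 1]
    refine tendsto_atTop_mono (fun T => ?_) (tendsto_atTop_add_const_right _ (σ x - 1) h)
    have h1 := hid (T + 1)
    rw [latConf_succ_eq_min_add hd, latInflow_succ] at h1
    linarith [min_le_right (latConf d σ T x) 1]

lemma tendsto_latInflow_of_tendsto_latOdo (hd : d ≠ 0) {σ : (Fin d → ℤ) → ℝ}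
    {x y : Fin d → ℤ} {i : Fin d} (hxy : x = y + Pi.single i 1 ∨ x = y - Pi.single i 1)
    (h : Tendsto (fun T => latOdo d σ T x) atTop atTop) :
    Tendsto (fun T => latInflow d σ T y) atTop atTop := by
  refine tendsto_atTop_mono (fun T => ?_) (h.const_mul_atTop (by positivity : 0 < (2 * (d : ℝ))⁻¹))
  rw [latOdo, Finset.mul_sum]
  exact Finset.sum_le_sum fun t _ => inv_mul_le_latAvg (latExcess_nonneg σ t) hxy

lemma eventually_one_le_latConf (hd : d ≠ 0) {σ : (Fin d → ℤ) → ℝ} {x : Fin d → ℤ}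
    (h : Tendsto (fun T => latInflow d σ T x) atTop atTop) :
    ∀ᶠ t in atTop, 1 ≤ latConf d σ t x := by
  suffices ∃ T, 1 ≤ latConf d σ T x by
    obtain ⟨T, hT⟩ := this
    exact eventually_atTop.2 ⟨T, fun t ht => one_le_latConf_of_le hd hT ht⟩
  -- While `x` never topples, its odometer is zero and it keeps all the mass it receives.
  by_contra! hlt
  obtain ⟨T, hT⟩ := (h.eventually_gt_atTop (1 - σ x)).exists
  have hodo : latOdo d σ T x = 0 :=
    Finset.sum_eq_zero fun t _ => max_eq_right (by linarith [hlt t])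
  linarith [latConf_add_latOdo hd σ T x, hlt T]

lemma latOdoInf_eq_top_of_eq_top (hd : d ≠ 0) {σ : (Fin d → ℤ) → ℝ} {x₀ : Fin d → ℤ}
    (h : latOdoInf d σ x₀ = ⊤) (x : Fin d → ℤ) : latOdoInf d σ x = ⊤ := by
  have hall : {x | latOdoInf d σ x = ⊤} = Set.univ := by
    refine eq_univ_of_forall_add_single_mem (fun y hy i => ?_) ⟨x₀, h⟩
    rw [Set.mem_ofPred_eq, latOdoInf_eq_top_iff] at hy
    simp only [Set.mem_ofPred_eq, latOdoInf_eq_top_iff, tendsto_latOdo_iff_tendsto_latInflow hd]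
    exact ⟨tendsto_latInflow_of_tendsto_latOdo hd (Or.inr (add_sub_cancel_right y _).symm) hy,
      tendsto_latInflow_of_tendsto_latOdo hd (Or.inl (sub_add_cancel y _).symm) hy⟩
  exact Set.eq_univ_iff_forall.mp hall x

def latShift (z : Fin d → ℤ) (σ : (Fin d → ℤ) → ℝ) : (Fin d → ℤ) → ℝ := fun x => σ (x + z)

lemma latLap_comp_add (f : (Fin d → ℤ) → ℝ) (z x : Fin d → ℤ) :
    latLap d (fun y => f (y + z)) x = latLap d f (x + z) := by
  simp only [latLap, update_add_eq_add_single, update_sub_eq_sub_single]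
  simp only [add_right_comm _ z, sub_add_eq_add_sub]

lemma latConf_latShift (z : Fin d → ℤ) (σ : (Fin d → ℤ) → ℝ) (t : ℕ) (x : Fin d → ℤ) :
    latConf d (latShift z σ) t x = latConf d σ t (x + z) := by
  induction t generalizing x with
  | zero => rfl
  | succ t ih =>
    have hexc : latExcess d (latShift z σ) t = fun y => latExcess d σ t (y + z) := by
      funext y; rw [latExcess, latExcess, ih]
    rw [latConf_succ, latConf_succ, ih, hexc, latLap_comp_add]

lemma latExcess_latShift (z : Fin d → ℤ) (σ : (Fin d → ℤ) → ℝ) (t : ℕ) (x : Fin d → ℤ) :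
    latExcess d (latShift z σ) t x = latExcess d σ t (x + z) := by
  rw [latExcess, latExcess, latConf_latShift]

lemma latOdoInf_latShift (z : Fin d → ℤ) (σ : (Fin d → ℤ) → ℝ) (x : Fin d → ℤ) :
    latOdoInf d (latShift z σ) x = latOdoInf d σ (x + z) := by
  simp only [latOdoInf, latOdo, latConf_latShift]

def latNonStabilizing (d : ℕ) : Set ((Fin d → ℤ) → ℝ) := {σ | ∃ x, latOdoInf d σ x = ⊤}

lemma preimage_latShift_latNonStabilizing (z : Fin d → ℤ) :
    latShift z ⁻¹' latNonStabilizing d = latNonStabilizing d := by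
  ext σ
  simp only [Set.mem_preimage, latNonStabilizing, Set.mem_ofPred_eq, latOdoInf_latShift]
  exact ⟨fun ⟨x, hx⟩ => ⟨x + z, hx⟩, fun ⟨x, hx⟩ => ⟨x - z, by rwa [sub_add_cancel]⟩⟩

lemma eventually_one_le_latConf_of_mem_latNonStabilizing (hd : d ≠ 0) {σ : (Fin d → ℤ) → ℝ}
    (hσ : σ ∈ latNonStabilizing d) (x : Fin d → ℤ) : ∀ᶠ t in atTop, 1 ≤ latConf d σ t x := by
  obtain ⟨x₀, hx₀⟩ := hσ
  have := latOdoInf_eq_top_of_eq_top hd hx₀ x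
  rw [latOdoInf_eq_top_iff, tendsto_latOdo_iff_tendsto_latInflow hd] at this
  exact eventually_one_le_latConf hd this

section Integral

variable {α : Type*} [MeasurableSpace α] {ν : Measure α}

lemma Measurable.latLap {F : (Fin d → ℤ) → α → ℝ} (hF : ∀ y, Measurable (F y))
    (x : Fin d → ℤ) : Measurable fun a => latLap d (fun y => F y a) x := by
  unfold _root_.latLap
  fun_prop

lemma Integrable.latLap {F : (Fin d → ℤ) → α → ℝ} (hF : ∀ y, Integrable (F y) ν)
    (x : Fin d → ℤ) : Integrable (fun a => latLap d (fun y => F y a) x) ν := by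
  unfold _root_.latLap
  refine Integrable.const_mul (integrable_finsetSum _ fun i _ => ?_) _
  exact ((hF _).sub (hF x)).add ((hF _).sub (hF x))

lemma integral_latLap_eq_zero {F : (Fin d → ℤ) → α → ℝ} (hF : ∀ y, Integrable (F y) ν)
    (hc : ∀ y, ∫ a, F y a ∂ν = ∫ a, F 0 a ∂ν) (x : Fin d → ℤ) :
    ∫ a, latLap d (fun y => F y a) x ∂ν = 0 := by
  unfold _root_.latLap
  beta_reduce
  rw [integral_const_mul, integral_finsetSum]
  · refine mul_eq_zero_of_right _ (Finset.sum_eq_zero fun i _ => ?_)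
    rw [integral_add (by exact (hF _).sub (hF x)) (by exact (hF _).sub (hF x)),
      integral_sub (hF _) (hF x), integral_sub (hF _) (hF x)]
    simp only [hc, sub_self, add_zero]
  · exact fun i _ => ((hF _).sub (hF x)).add ((hF _).sub (hF x))

end Integral

lemma measurable_latConf (t : ℕ) (x : Fin d → ℤ) :
    Measurable fun σ : (Fin d → ℤ) → ℝ => latConf d σ t x := by
  induction t generalizing x with
  | zero => exact measurable_pi_apply x
  | succ t ih =>
    exact (ih x).add (Measurable.latLap (fun y => ((ih y).sub_const 1).max measurable_const) x)

lemma measurable_latExcess (t : ℕ) (x : Fin d → ℤ) :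
    Measurable fun σ : (Fin d → ℤ) → ℝ => latExcess d σ t x :=
  ((measurable_latConf t x).sub_const 1).max measurable_const

lemma measurableSet_latNonStabilizing : MeasurableSet (latNonStabilizing d) := by
  rw [latNonStabilizing, Set.ofPred_exists]
  refine .iUnion fun x => ?_
  have : Measurable fun σ : (Fin d → ℤ) → ℝ => latOdoInf d σ x :=
    .iSup fun T => ENNReal.measurable_ofReal.comp
      (Finset.measurable_sum _ fun t _ => measurable_latExcess t x)
  exact this (measurableSet_singleton ⊤)

lemma measurable_latShift (z : Fin d → ℤ) : Measurable (latShift (d := d) z) :=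
  measurable_pi_lambda _ fun x => measurable_pi_apply (x + z)

section Stationary

variable {ν : Measure ((Fin d → ℤ) → ℝ)} (hν : ∀ z, MeasurePreserving (latShift z) ν ν)
include hν

lemma integral_comp_latShift (z : Fin d → ℤ) {F : ((Fin d → ℤ) → ℝ) → ℝ}
    (hF : AEStronglyMeasurable F ν) : ∫ σ, F (latShift z σ) ∂ν = ∫ σ, F σ ∂ν := by
  rw [← integral_map (hν z).measurable.aemeasurable (by rwa [(hν z).map_eq]), (hν z).map_eq]

variable [IsFiniteMeasure ν] (hint : Integrable (fun σ => σ 0) ν)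
include hint

lemma integrable_latConf (t : ℕ) (x : Fin d → ℤ) :
    Integrable (fun σ => latConf d σ t x) ν := by
  induction t generalizing x with
  | zero =>
    simpa [latConf, latShift, Function.comp_def] using (hν x).integrable_comp_of_integrable hint
  | succ t ih =>
    exact (ih x).add (Integrable.latLap (fun y => ((ih y).sub (integrable_const 1)).pos_part) x)

lemma integral_latConf (t : ℕ) : ∫ σ, latConf d σ t 0 ∂ν = ∫ σ, σ 0 ∂ν := by
  induction t with
  | zero => rfl
  | succ t ih =>
    have hexc (y : Fin d → ℤ) : Integrable (fun σ => latExcess d σ t y) ν :=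
      ((integrable_latConf hν hint t y).sub (integrable_const 1)).pos_part
    have hshift (y : Fin d → ℤ) : ∫ σ, latExcess d σ t y ∂ν = ∫ σ, latExcess d σ t 0 ∂ν := by
      simpa [latExcess_latShift] using
        integral_comp_latShift hν y (measurable_latExcess t 0).aestronglyMeasurable
    simp_rw [latConf_succ]
    rw [integral_add (integrable_latConf hν hint t 0) (Integrable.latLap hexc 0),
      integral_latLap_eq_zero hexc hshift, add_zero, ih]

end Stationary

section InfinitePi

open Measure

variable (ρ : Measure ℝ) [IsProbabilityMeasure ρ]

lemma measurePreserving_latShift_infinitePi (z : Fin d → ℤ) :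
    MeasurePreserving (latShift z) (infinitePi fun _ => ρ) (infinitePi fun _ => ρ) :=
  ⟨measurable_latShift z, map_infinitePi_infinitePi_of_inj (add_left_injective z)⟩

lemma setIntegral_eval_infinitePi (hd : d ≠ 0) (hint : Integrable id ρ)
    {A : Set ((Fin d → ℤ) → ℝ)}
    (hA : ∀ x, ∫ σ in A, σ x ∂infinitePi (fun _ => ρ) = ∫ σ in A, σ 0 ∂infinitePi (fun _ => ρ)) :
    ∫ σ in A, σ 0 ∂infinitePi (fun _ => ρ) = (infinitePi fun _ => ρ).real A * ∫ a, a ∂ρ := by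
  have : Nonempty (Fin d) := ⟨⟨0, Nat.pos_of_ne_zero hd⟩⟩
  have : Denumerable (Fin d → ℤ) := Denumerable.ofEncodableOfInfinite _
  let e : ℕ ≃ (Fin d → ℤ) := (Denumerable.eqv _).symm
  have heval (x : Fin d → ℤ) := measurePreserving_eval_infinitePi (fun _ : Fin d → ℤ => ρ) x
  have hindep := iIndepFun_infinitePi (P := fun _ : Fin d → ℤ => ρ) (X := fun _ => id)
    fun _ => measurable_id
  have hmean : ∫ σ, σ (e 0) ∂infinitePi (fun _ => ρ) = ∫ a, a ∂ρ := by
    conv_rhs => rw [← (heval (e 0)).map_eq]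
    exact (integral_map (heval _).measurable.aemeasurable aestronglyMeasurable_id).symm
  rw [← hmean]
  exact eq_measureReal_mul_integral_of_setIntegral_eq (X := fun i σ => σ (e i))
    ((heval _).integrable_comp_of_integrable hint)
    (fun i j hij => hindep.indepFun (e.injective.ne hij))
    (fun i => ⟨(heval _).measurable.aemeasurable, (heval _).measurable.aemeasurable,
      (heval _).map_eq.trans (heval _).map_eq.symm⟩)
    A fun i => hA (e i)

theorem infinitePi_latNonStabilizing_eq_zero (hd : d ≠ 0) (hint : Integrable id ρ)
    (hmean : ∫ a, a ∂ρ < 1) : infinitePi (fun _ : Fin d → ℤ => ρ) (latNonStabilizing d) = 0 := by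
  set ν := infinitePi fun _ : Fin d → ℤ => ρ
  set N := latNonStabilizing d
  have hN : MeasurableSet N := measurableSet_latNonStabilizing
  have hstat (z : Fin d → ℤ) : MeasurePreserving (latShift z) (ν.restrict N) (ν.restrict N) := by
    simpa [N, preimage_latShift_latNonStabilizing] using
      (measurePreserving_latShift_infinitePi ρ z).restrict_preimage hN
  have hint₀ : Integrable (fun σ => σ 0) (ν.restrict N) :=
    ((measurePreserving_eval_infinitePi (fun _ => ρ) 0).integrable_comp_of_integrable hint :
      Integrable (fun σ => σ 0) ν).restrict
  have hle : ν.real N ≤ ∫ σ in N, σ 0 ∂ν := by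
    simpa using measureReal_univ_le_of_eventually_one_le (f := fun t σ => latConf d σ t 0)
      (hint₀.inf (integrable_const 1)) (integrable_latConf hstat hint₀ · 0)
      (fun t σ => min_le_latConf hd σ t 0)
      ((ae_restrict_iff' hN).mpr (ae_of_all _ fun σ hσ =>
        eventually_one_le_latConf_of_mem_latNonStabilizing hd hσ 0))
      (fun t => (integral_latConf hstat hint₀ t).le)
  have heq : ∫ σ in N, σ 0 ∂ν = ν.real N * ∫ a, a ∂ρ :=
    setIntegral_eval_infinitePi ρ hd hint fun x => by
      simpa [latShift] using
        integral_comp_latShift hstat x (measurable_pi_apply 0).aestronglyMeasurable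
  have : ν.real N ≤ 0 := by nlinarith [measureReal_nonneg (μ := ν) (s := N)]
  exact (measureReal_eq_zero_iff).mp (le_antisymm this measureReal_nonneg)

end InfinitePi

theorem subcritical_sandpile_stabilizes_general (d : ℕ) (hd : 1 ≤ d)
    (Ω : Type) (mΩ : MeasurableSpace Ω) (μ : Measure Ω)
    (s : (Fin d → ℤ) → Ω → ℝ)
    (hindep : iIndepFun s μ)
    (hident : ∀ x y, IdentDistrib (s x) (s y) μ μ)
    (hint : Integrable (s 0) μ)
    (hmean : ∫ ω, s 0 ω ∂μ < 1) :
    ∀ᵐ ω ∂μ, ∀ x : Fin d → ℤ, latOdoInf d (fun y => s y ω) x < ⊤ := by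
  have := hindep.isProbabilityMeasure
  have hmeas (x : Fin d → ℤ) : AEMeasurable (s x) μ := (hident x 0).aemeasurable_fst
  have := Measure.isProbabilityMeasure_map (hmeas 0)
  have hlaw : μ.map (fun ω x => s x ω) = Measure.infinitePi fun _ => μ.map (s 0) := by
    rw [hindep.map_fun_eq_infinitePi_map₀' hmeas]
    exact congrArg _ (funext fun x => (hident x 0).map_eq)
  have hN := infinitePi_latNonStabilizing_eq_zero (μ.map (s 0)) (Nat.one_le_iff_ne_zero.mp hd)
    ((integrable_map_measure aestronglyMeasurable_id (hmeas 0)).mpr hint)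
    ((integral_map (hmeas 0) aestronglyMeasurable_id).trans_lt hmean)
  rw [← hlaw, measure_eq_zero_iff_ae_notMem] at hN
  filter_upwards [ae_of_ae_map (aemeasurable_pi_iff.mpr hmeas) hN] with ω hω x
  exact lt_top_iff_ne_top.mpr fun hx => hω ⟨x, hx⟩

/-- **Subcritical stabilization on `ℤ^d`.** If `(s(x))_{x ∈ ℤ^d}` are i.i.d.
with `E[|s(0)|] < ∞` and `E[s(0)] < 1`, then almost surely `s` stabilizes under parallel
toppling: `u_∞(x) < ∞` for every `x`. -/
theorem subcritical_sandpile_stabilizes (d : ℕ) (hd : 1 ≤ d)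
    (Ω : Type) (mΩ : MeasurableSpace Ω) (μ : Measure Ω) (hμ : IsProbabilityMeasure μ)
    (s : (Fin d → ℤ) → Ω → ℝ)
    (hmeas : ∀ x, Measurable (s x))
    (hindep : iIndepFun s μ)
    (hident : ∀ x y, IdentDistrib (s x) (s y) μ μ)
    (hint : Integrable (s 0) μ)
    (hmean : ∫ ω, s 0 ω ∂μ < 1) :
    ∀ᵐ ω ∂μ, ∀ x : Fin d → ℤ, latOdoInf d (fun y => s y ω) x < ⊤ :=
  subcritical_sandpile_stabilizes_general d hd Ω mΩ μ s hindep hident hint hmean
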